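/- arXiv:2408.09809 — 2 statements merged into one kernel-verified Lean document; each statement's English description precedes it below -/
import Mathlib

section
/- For every d ≥ 1 and μ ≥ 0, the cardinalities of nested Smolyak grids satisfy the recursion N(d+1,μ) = f(1)·N(d,μ) + Σ_{ℓ=1}^{μ} (f(ℓ+1) − f(ℓ))·N(d,μ−ℓ). -/
/-- Multi-indices `i : Fin d → ℕ` with `i k ≥ 1` for all `k` and `∑ k, i k = d + μ`. -/
def smolyakIndices (d μ : ℕ) : Finset (Fin d → ℕ) :=
  (Fintype.piFinset fun _ => Finset.Icc 1 (d + μ)).filter fun i => ∑ k, i k = d + μ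

/-- The Smolyak grid `Γ(d, μ)` based on the node sets `S`. -/
noncomputable def smolyakGrid (S : ℕ → Finset ℝ) (d μ : ℕ) : Finset (Fin d → ℝ) :=
  (smolyakIndices d μ).biUnion fun i => Fintype.piFinset fun k => S (i k)

/-- `N(d, μ)`: the number of nodes in the Smolyak grid. -/
noncomputable def smolyakCard (S : ℕ → Finset ℝ) (d μ : ℕ) : ℕ :=
  (smolyakGrid S d μ).card

/-!
Splitting off the first coordinate, `Γ(d+1, μ)` is the union over `ℓ ≤ μ` of
`S(ℓ+1) × Γ(d, μ-ℓ)`. The first factors increase and the second ones decrease with `ℓ`, so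
replacing `S(ℓ+1)` by its new points `S(ℓ+1) \ S(ℓ)` (all of `S(1)` for `ℓ = 0`) leaves the union
unchanged and makes it disjoint; counting its pieces gives the recursion.
-/

open Finset

section Staircase

variable {α β : Type*} [DecidableEq α] [DecidableEq β]

theorem card_biUnion_Iic_product_of_monotone_of_antitone {A : ℕ → Finset α} {B : ℕ → Finset β}
    (hA : Monotone A) (hB : Antitone B) (n : ℕ) :
    #((Iic n).biUnion fun ℓ => A ℓ ×ˢ B ℓ) = ∑ ℓ ∈ Iic n, #(disjointed A ℓ) * #(B ℓ) := by
  have hunion : ((Iic n).biUnion fun ℓ => A ℓ ×ˢ B ℓ) =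
      (Iic n).biUnion fun ℓ => disjointed A ℓ ×ˢ B ℓ := by
    refine subset_antisymm ?_
      (biUnion_mono fun ℓ _ => product_subset_product_left (disjointed_le A ℓ))
    rintro ⟨a, b⟩ hab
    obtain ⟨ℓ, hℓ, ha, hb⟩ : ∃ ℓ ∈ Iic n, a ∈ A ℓ ∧ b ∈ B ℓ := by simpa using hab
    have ha : a ∈ partialSups (disjointed A) ℓ := by
      rwa [partialSups_disjointed, hA.partialSups_eq]
    simp only [partialSups_apply, sup'_eq_sup, sup_eq_biUnion, mem_biUnion] at ha
    obtain ⟨j, hj, haj⟩ := ha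
    exact mem_biUnion.2 ⟨j, mem_Iic.2 ((mem_Iic.1 hj).trans (mem_Iic.1 hℓ)),
      mem_product.2 ⟨haj, hB (mem_Iic.1 hj) hb⟩⟩
  rw [hunion, card_biUnion]
  · simp only [card_product]
  · intro i _ j _ hij
    exact disjoint_product.2 (Or.inl (disjoint_disjointed A hij))

theorem Monotone.card_disjointed_add_one {A : ℕ → Finset α} (hA : Monotone A) (n : ℕ) :
    #(disjointed A (n + 1)) = #(A (n + 1)) - #(A n) := by
  rw [hA.disjointed_add_one, card_sdiff_of_subset (hA (le_add_right le_rfl))]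

end Staircase

section SmolyakGrid

variable {S : ℕ → Finset ℝ}

theorem mem_smolyakIndices {d μ : ℕ} {i : Fin d → ℕ} :
    i ∈ smolyakIndices d μ ↔ (∀ k, 1 ≤ i k) ∧ ∑ k, i k = d + μ := by
  simp only [smolyakIndices, mem_filter, Fintype.mem_piFinset, mem_Icc]
  refine ⟨fun ⟨hi, hsum⟩ => ⟨fun k => (hi k).1, hsum⟩,
    fun ⟨hi, hsum⟩ => ⟨fun k => ⟨hi k, ?_⟩, hsum⟩⟩
  exact hsum ▸ single_le_sum (fun j _ => Nat.zero_le (i j)) (mem_univ k)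

theorem mem_smolyakGrid {d μ : ℕ} {x : Fin d → ℝ} :
    x ∈ smolyakGrid S d μ ↔ ∃ i ∈ smolyakIndices d μ, ∀ k, x k ∈ S (i k) := by
  simp only [smolyakGrid, mem_biUnion, Fintype.mem_piFinset]

theorem cons_mem_smolyakIndices_succ {d μ a : ℕ} {i : Fin d → ℕ} :
    (Fin.cons a i : Fin (d + 1) → ℕ) ∈ smolyakIndices (d + 1) μ ↔
      ∃ ℓ ≤ μ, a = ℓ + 1 ∧ i ∈ smolyakIndices d (μ - ℓ) := by
  simp only [mem_smolyakIndices, Fin.forall_fin_succ, Fin.sum_univ_succ, Fin.cons_zero,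
    Fin.cons_succ]
  constructor
  · rintro ⟨⟨ha, hi⟩, hsum⟩
    have htail : d ≤ ∑ k, i k := by simpa using card_nsmul_le_sum univ i 1 fun k _ => hi k
    exact ⟨a - 1, by omega, by omega, hi, by omega⟩
  · rintro ⟨ℓ, hℓ, rfl, hi, hsum⟩
    exact ⟨⟨le_add_self, hi⟩, by omega⟩

theorem smolyakGrid_succ (d μ : ℕ) :
    smolyakGrid S (d + 1) μ =
      ((Iic μ).biUnion fun ℓ => S (ℓ + 1) ×ˢ smolyakGrid S d (μ - ℓ)).map
        (Fin.consEquiv fun _ => ℝ).toEmbedding := by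
  ext x
  obtain ⟨⟨a, y⟩, rfl⟩ := (Fin.consEquiv fun _ => ℝ).surjective x
  simp only [mem_map_equiv, Equiv.symm_apply_apply, mem_biUnion, mem_Iic, mem_product,
    mem_smolyakGrid, Fin.exists_fin_succ_pi, Fin.forall_fin_succ, Fin.consEquiv_apply,
    Fin.cons_zero, Fin.cons_succ, cons_mem_smolyakIndices_succ]
  constructor
  · rintro ⟨_, i, ⟨ℓ, hℓ, rfl, hi⟩, ha, hy⟩
    exact ⟨ℓ, hℓ, ha, i, hi, hy⟩
  · rintro ⟨ℓ, hℓ, ha, i, hi, hy⟩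
    exact ⟨ℓ + 1, i, ⟨ℓ, hℓ, rfl, hi⟩, ha, hy⟩

theorem smolyakGrid_subset_smolyakGrid_add_one (hS : ∀ k, 1 ≤ k → S k ⊆ S (k + 1)) (d μ : ℕ) :
    smolyakGrid S (d + 1) μ ⊆ smolyakGrid S (d + 1) (μ + 1) := by
  rw [smolyakGrid_succ, smolyakGrid_succ]
  refine map_subset_map.2 fun p hp => ?_
  obtain ⟨ℓ, hℓ, hp⟩ := mem_biUnion.1 hp
  refine mem_biUnion.2 ⟨ℓ + 1, by simpa using hℓ, ?_⟩
  simpa using product_subset_product_left (hS (ℓ + 1) ℓ.succ_pos) hp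

theorem smolyakGrid_mono (hS : ∀ k, 1 ≤ k → S k ⊆ S (k + 1)) {d : ℕ} (hd : 1 ≤ d) :
    Monotone (smolyakGrid S d) := by
  obtain ⟨d, rfl⟩ := Nat.exists_eq_add_of_le' hd
  exact monotone_nat_of_le_succ (smolyakGrid_subset_smolyakGrid_add_one hS d)

end SmolyakGrid

theorem smolyakCard_recursion_general
    (f : ℕ → ℕ)
    (S : ℕ → Finset ℝ) (hS_nested : ∀ k, 1 ≤ k → S k ⊆ S (k + 1))
    (hS_card : ∀ k, 1 ≤ k → (S k).card = f k)
    (d μ : ℕ) (hd : 1 ≤ d) :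
    smolyakCard S (d + 1) μ =
      f 1 * smolyakCard S d μ +
        ∑ ℓ ∈ Finset.Icc 1 μ, (f (ℓ + 1) - f ℓ) * smolyakCard S d (μ - ℓ) := by
  have hA : Monotone fun ℓ => S (ℓ + 1) :=
    monotone_nat_of_le_succ fun ℓ => hS_nested (ℓ + 1) ℓ.succ_pos
  have hB : Antitone fun ℓ => smolyakGrid S d (μ - ℓ) :=
    (smolyakGrid_mono hS_nested hd).comp_antitone fun _ _ h => Nat.sub_le_sub_left h μ
  have hcount : smolyakCard S (d + 1) μ =
      ∑ ℓ ∈ Iic μ, #(disjointed (fun ℓ => S (ℓ + 1)) ℓ) * smolyakCard S d (μ - ℓ) := by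
    rw [smolyakCard, smolyakGrid_succ, card_map,
      card_biUnion_Iic_product_of_monotone_of_antitone hA hB]
    rfl
  rw [hcount, Iic_eq_Icc, Nat.bot_eq_zero, ← insert_Icc_add_one_left_eq_Icc (Nat.zero_le μ),
    sum_insert (by simp), disjointed_zero, hS_card 1 le_rfl, Nat.sub_zero]
  refine congrArg _ (sum_congr rfl fun ℓ hℓ => ?_)
  obtain ⟨j, rfl⟩ := Nat.exists_eq_add_of_le' (mem_Icc.1 hℓ).1
  rw [hA.card_disjointed_add_one, hS_card _ (by omega), hS_card _ (by omega)]

/-- The recursion `N(d+1, μ) = f(1)·N(d, μ) + ∑_{ℓ=1}^{μ} (f(ℓ+1) - f(ℓ))·N(d, μ-ℓ)` for the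
cardinalities of nested Smolyak grids. -/
theorem smolyakCard_recursion
    (f : ℕ → ℕ) (hf_mono : ∀ k, 1 ≤ k → f k ≤ f (k + 1)) (hf_pos : ∀ k, 1 ≤ k → 1 ≤ f k)
    (S : ℕ → Finset ℝ) (hS_nested : ∀ k, 1 ≤ k → S k ⊆ S (k + 1))
    (hS_card : ∀ k, 1 ≤ k → (S k).card = f k)
    (d μ : ℕ) (hd : 1 ≤ d) :
    smolyakCard S (d + 1) μ =
      f 1 * smolyakCard S d μ +
        ∑ ℓ ∈ Finset.Icc 1 μ, (f (ℓ + 1) - f ℓ) * smolyakCard S d (μ - ℓ) :=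
  smolyakCard_recursion_general f S hS_nested hS_card d μ hd
end

section
/- Suppose the growth function satisfies f(1) = 1 and f(k) = 2^{k−1} + 1 for k ≥ 2. Then for every fixed d ≥ 1, the quotient N(d,μ) / (2^μ · μ^{d−1}) tends to 1/(2^{d−1}·(d−1)!) as μ → ∞. -/
/-!
Give each node the level at which it first enters the nested sequence. For `d ≥ 1` a point lies
in `Γ(d, μ)` iff its coordinate levels `t + 1` satisfy `∑ t ≤ μ`, so `Γ(d, μ)` is the disjoint
union over such `t` of products of the new-node sets `S (t + 1) \ S t` (with `S 0 = ∅`), of sizes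
`1, 2, 2, 4, 8, …`. Hence `N(d + 1, ·)` is the convolution of these sizes with `N(d, ·)`, and the
normalised counts `u_d(μ) = N(d, μ) / 2^μ` satisfy `u_{d+1}(n + 1) = s_d(n + 2) - s_d(n) / 2`,
where `s_d` are the partial sums of `u_d`. Summing a sequence of growth `c n^D` gives growth
`c n^(D+1) / (D + 1)`, so by induction `s_d(n) ~ 2 n^d / (2^d d!)` and
`u_{d+1}(n) ~ n^d / (2^d d!)`.
-/

open Finset

section NewNodes

variable {α : Type*} {S : ℕ → Finset α}

theorem subset_of_nested_of_le (hS : ∀ k, 1 ≤ k → S k ⊆ S (k + 1)) {a b : ℕ} (ha : 1 ≤ a)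
    (hab : a ≤ b) : S a ⊆ S b := by
  induction b, hab using Nat.le_induction with
  | base => exact subset_rfl
  | succ b hb ih => exact ih.trans (hS b (ha.trans hb))

variable [DecidableEq α]

-- `newNodes S t` is the set of nodes of level `t + 1`: levels are shifted to start at `0`.
variable (S) in
def newNodes : ℕ → Finset α
  | 0 => S 1
  | t + 1 => S (t + 2) \ S (t + 1)

theorem newNodes_subset (t : ℕ) : newNodes S t ⊆ S (t + 1) := by
  cases t <;> simp [newNodes, sdiff_subset]

theorem mem_iff_exists_mem_newNodes (hS : ∀ k, 1 ≤ k → S k ⊆ S (k + 1)) {y : α} (j : ℕ) :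
    y ∈ S (j + 1) ↔ ∃ t ≤ j, y ∈ newNodes S t := by
  induction j with
  | zero => simp [newNodes]
  | succ j ih =>
    constructor
    · intro hy
      by_cases hj : y ∈ S (j + 1)
      · obtain ⟨t, ht, hyt⟩ := ih.1 hj
        exact ⟨t, by omega, hyt⟩
      · exact ⟨j + 1, le_rfl, by simp [newNodes, hy, hj]⟩
    · rintro ⟨t, ht, hyt⟩
      exact subset_of_nested_of_le hS (by omega) (by omega) (newNodes_subset t hyt)

theorem disjoint_newNodes (hS : ∀ k, 1 ≤ k → S k ⊆ S (k + 1)) {s t : ℕ} (hst : s ≠ t) :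
    Disjoint (newNodes S s) (newNodes S t) := by
  wlog h : s < t generalizing s t
  · exact (this hst.symm (by omega)).symm
  obtain ⟨t, rfl⟩ : ∃ t', t = t' + 1 := ⟨t - 1, by omega⟩
  have hs : newNodes S s ⊆ S (t + 1) :=
    (newNodes_subset s).trans (subset_of_nested_of_le hS (by omega) (by omega))
  exact disjoint_sdiff.mono_left hs

end NewNodes

def simplexTuples (d m : ℕ) : Finset (Fin d → ℕ) :=
  (Fintype.piFinset fun _ => range (m + 1)).filter fun t => ∑ k, t k ≤ m

@[simp]
theorem mem_simplexTuples {d m : ℕ} {t : Fin d → ℕ} : t ∈ simplexTuples d m ↔ ∑ k, t k ≤ m := by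
  simp only [simplexTuples, mem_filter, Fintype.mem_piFinset, mem_range, and_iff_right_iff_imp]
  intro h k
  have := single_le_sum (fun k _ => Nat.zero_le (t k)) (mem_univ k)
  omega

def simplexSum {R : Type*} [CommSemiring R] (w : ℕ → R) (d m : ℕ) : R :=
  ∑ t ∈ simplexTuples d m, ∏ k, w (t k)

section SimplexSum

variable {R : Type*} [CommSemiring R] (w : ℕ → R)

@[simp]
theorem simplexSum_zero (m : ℕ) : simplexSum w 0 m = 1 := by
  have : simplexTuples 0 m = univ := eq_univ_of_forall fun t => by simp
  simp [simplexSum, this]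

theorem simplexSum_succ (d m : ℕ) :
    simplexSum w (d + 1) m = ∑ a ∈ range (m + 1), w a * simplexSum w d (m - a) := by
  simp only [simplexSum, mul_sum]
  rw [sum_sigma']
  refine sum_nbij' (fun t => ⟨t 0, Fin.tail t⟩) (fun p => Fin.cons p.1 p.2) ?_ ?_ ?_ ?_ ?_
  · intro t ht
    have := Fin.sum_univ_succ t
    simp only [mem_simplexTuples] at ht
    simp only [mem_sigma, mem_range, Order.lt_add_one_iff, mem_simplexTuples, Fin.tail]
    omega
  · rintro ⟨a, s⟩ hp
    simp only [mem_sigma, mem_range, mem_simplexTuples] at hp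
    simp only [mem_simplexTuples, Fin.sum_cons]
    omega
  · intro t _
    simp
  · rintro ⟨a, s⟩ _
    simp
  · intro t _
    simp [Fin.prod_univ_succ, Fin.tail]

end SimplexSum

theorem mem_smolyakGrid_iff {S : ℕ → Finset ℝ} (hS : ∀ k, 1 ≤ k → S k ⊆ S (k + 1)) {d : ℕ}
    (hd : 1 ≤ d) (μ : ℕ) {x : Fin d → ℝ} :
    x ∈ smolyakGrid S d μ ↔ ∃ t ∈ simplexTuples d μ, ∀ k, x k ∈ newNodes S (t k) := by
  simp only [smolyakGrid, smolyakIndices, mem_biUnion, mem_filter, Fintype.mem_piFinset,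
    mem_Icc, mem_simplexTuples]
  constructor
  · rintro ⟨i, ⟨hi, hsum⟩, hx⟩
    have hlevel : ∀ k, ∃ t ≤ i k - 1, x k ∈ newNodes S t := fun k =>
      (mem_iff_exists_mem_newNodes hS _).1 (by rw [Nat.sub_add_cancel (hi k).1]; exact hx k)
    choose t ht hxt using hlevel
    refine ⟨t, ?_, hxt⟩
    have := sum_le_sum fun k (_ : k ∈ univ) => Nat.add_le_of_le_sub (hi k).1 (ht k)
    simp only [sum_add_distrib, sum_const, card_univ, Fintype.card_fin, smul_eq_mul,
      mul_one] at this
    omega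
  · rintro ⟨t, ht, hxt⟩
    let k₀ : Fin d := ⟨0, hd⟩
    let i : Fin d → ℕ := fun k => t k + 1 + (Pi.single k₀ (μ - ∑ k, t k) : Fin d → ℕ) k
    have hsum : ∑ k, i k = d + μ := by
      simp only [i, sum_add_distrib, sum_pi_single', sum_const, card_univ, Fintype.card_fin,
        smul_eq_mul, mul_one, mem_univ, if_true]
      omega
    refine ⟨i, ⟨fun k => ⟨by dsimp only [i]; omega, ?_⟩, hsum⟩, fun k => ?_⟩
    · exact hsum ▸ single_le_sum (fun k _ => Nat.zero_le (i k)) (mem_univ k)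
    · exact subset_of_nested_of_le hS (by omega) (by dsimp only [i]; omega)
        (newNodes_subset _ (hxt k))

theorem smolyakCard_eq_simplexSum {S : ℕ → Finset ℝ} (hS : ∀ k, 1 ≤ k → S k ⊆ S (k + 1))
    {d : ℕ} (hd : 1 ≤ d) (μ : ℕ) :
    smolyakCard S d μ = simplexSum (fun t => (newNodes S t).card) d μ := by
  have hgrid : smolyakGrid S d μ =
      (simplexTuples d μ).biUnion fun t => Fintype.piFinset fun k => newNodes S (t k) := by
    ext x
    simp only [mem_smolyakGrid_iff hS hd, mem_biUnion, Fintype.mem_piFinset]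
  rw [smolyakCard, hgrid, card_biUnion]
  · simp [simplexSum]
  · intro t _ t' _ htt'
    obtain ⟨k, hk⟩ := Function.ne_iff.1 htt'
    exact Fintype.piFinset_disjoint_of_disjoint _ _ (disjoint_newNodes hS hk)

open Filter Asymptotics Topology

theorem add_one_pow_succ_sub_pow_bounds {x : ℝ} (hx : 0 ≤ x) (D : ℕ) :
    (D + 1) * x ^ D ≤ (x + 1) ^ (D + 1) - x ^ (D + 1) ∧
      (x + 1) ^ (D + 1) - x ^ (D + 1) ≤ (D + 1) * (x + 1) ^ D := by
  rw [← geom_sum₂_mul, add_sub_cancel_left, mul_one]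
  simp only [add_tsub_cancel_right]
  have hterm (i : ℕ) (hi : i ∈ range (D + 1)) :
      x ^ D ≤ (x + 1) ^ i * x ^ (D - i) ∧ (x + 1) ^ i * x ^ (D - i) ≤ (x + 1) ^ D := by
    have hiD : i + (D - i) = D := by have := mem_range.1 hi; omega
    constructor
    · calc x ^ D = x ^ i * x ^ (D - i) := by rw [← pow_add, hiD]
        _ ≤ (x + 1) ^ i * x ^ (D - i) := by gcongr; linarith
    · calc (x + 1) ^ i * x ^ (D - i) ≤ (x + 1) ^ i * (x + 1) ^ (D - i) := by gcongr; linarith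
        _ = (x + 1) ^ D := by rw [← pow_add, hiD]
  constructor
  · simpa using sum_le_sum fun i hi => (hterm i hi).1
  · simpa using sum_le_sum fun i hi => (hterm i hi).2

theorem tendsto_sum_range_pow_div_pow_succ (D : ℕ) :
    Tendsto (fun n : ℕ => (∑ k ∈ range n, (k : ℝ) ^ D) / (n : ℝ) ^ (D + 1)) atTop
      (𝓝 (1 / (D + 1))) := by
  have telescope (n : ℕ) :
      (n : ℝ) ^ (D + 1) = ∑ k ∈ range n, (((k : ℝ) + 1) ^ (D + 1) - (k : ℝ) ^ (D + 1)) := by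
    simpa using (sum_range_sub (fun k : ℕ => (k : ℝ) ^ (D + 1)) n).symm
  have upper (n : ℕ) : (D + 1) * ∑ k ∈ range n, (k : ℝ) ^ D ≤ (n : ℝ) ^ (D + 1) := by
    rw [telescope, mul_sum]
    exact sum_le_sum fun k _ => (add_one_pow_succ_sub_pow_bounds k.cast_nonneg D).1
  have lower (n : ℕ) :
      (n : ℝ) ^ (D + 1) ≤ (D + 1) * (∑ k ∈ range n, (k : ℝ) ^ D + (n : ℝ) ^ D) := by
    have hshift :
        ∑ k ∈ range n, ((k : ℝ) + 1) ^ D ≤ ∑ k ∈ range n, (k : ℝ) ^ D + (n : ℝ) ^ D := by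
      have := sum_range_succ' (fun k : ℕ => (k : ℝ) ^ D) n
      rw [sum_range_succ] at this
      push_cast at this
      linarith [pow_nonneg (le_refl (0 : ℝ)) D]
    calc (n : ℝ) ^ (D + 1) ≤ ∑ k ∈ range n, (D + 1) * ((k : ℝ) + 1) ^ D := by
          rw [telescope]
          exact sum_le_sum fun k _ => (add_one_pow_succ_sub_pow_bounds k.cast_nonneg D).2
      _ ≤ _ := by rw [← mul_sum]; gcongr
  have hD : (0 : ℝ) < D + 1 := by positivity
  have hlim : Tendsto (fun n : ℕ => 1 / ((D : ℝ) + 1) - 1 / (n : ℝ)) atTop (𝓝 (1 / (D + 1))) := by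
    simpa using tendsto_const_nhds.sub (tendsto_one_div_atTop_nhds_zero_nat (𝕜 := ℝ))
  refine tendsto_of_tendsto_of_tendsto_of_le_of_le' hlim tendsto_const_nhds ?_ ?_
  · filter_upwards [eventually_gt_atTop 0] with n hn
    have hn' : (0 : ℝ) < n := by exact_mod_cast hn
    rw [le_div_iff₀ (by positivity)]
    have := lower n
    rw [pow_succ] at this ⊢
    field_simp
    nlinarith [pow_pos hn' D]
  · filter_upwards [eventually_gt_atTop 0] with n hn
    rw [div_le_iff₀ (by positivity), one_div_mul_eq_div, le_div_iff₀ hD, mul_comm]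
    exact upper n

theorem tendsto_sum_range_div_pow_succ {v : ℕ → ℝ} {c : ℝ} {D : ℕ}
    (h : Tendsto (fun n : ℕ => v n / (n : ℝ) ^ D) atTop (𝓝 c)) :
    Tendsto (fun n : ℕ => (∑ k ∈ range n, v k) / (n : ℝ) ^ (D + 1)) atTop (𝓝 (c / (D + 1))) := by
  have hpow_ne : ∀ᶠ n : ℕ in atTop, ∀ e, (n : ℝ) ^ e ≠ 0 := by
    filter_upwards [eventually_gt_atTop 0] with n hn e using pow_ne_zero e (by positivity)
  have hP := tendsto_sum_range_pow_div_pow_succ D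
  have herr : (fun k : ℕ => v k - c * (k : ℝ) ^ D) =o[atTop] fun k : ℕ => (k : ℝ) ^ D := by
    rw [isLittleO_iff_tendsto' (hpow_ne.mono fun n hn h0 => absurd h0 (hn D))]
    refine Tendsto.congr' ?_ (by simpa using h.sub_const c)
    filter_upwards [hpow_ne] with n hn
    field_simp [hn D]
  have hPtop : Tendsto (fun n : ℕ => ∑ k ∈ range n, (k : ℝ) ^ D) atTop atTop := by
    refine (hP.pos_mul_atTop (by positivity)
      ((tendsto_pow_atTop (n := D + 1) (by omega)).comp tendsto_natCast_atTop_atTop)).congr' ?_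
    filter_upwards [hpow_ne] with n hn
    exact div_mul_cancel₀ _ (hn (D + 1))
  have hPO : (fun n : ℕ => ∑ k ∈ range n, (k : ℝ) ^ D) =O[atTop] fun n : ℕ => (n : ℝ) ^ (D + 1) :=
    isBigO_of_div_tendsto_nhds (hpow_ne.mono fun n hn h0 => absurd h0 (hn _)) _ hP
  have hsum :=
    ((herr.sum_range (fun k => by positivity) hPtop).trans_isBigO hPO).tendsto_div_nhds_zero
  have := hsum.add (hP.const_mul c)
  rw [zero_add, ← div_eq_mul_one_div] at this
  refine this.congr fun n => ?_
  simp only [sum_sub_distrib, ← mul_sum]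
  ring

theorem tendsto_comp_add_div_pow_iff {v : ℕ → ℝ} {c : ℝ} (D k : ℕ) :
    Tendsto (fun n : ℕ => v (n + k) / (n : ℝ) ^ D) atTop (𝓝 c) ↔
      Tendsto (fun n : ℕ => v n / (n : ℝ) ^ D) atTop (𝓝 c) := by
  rw [← tendsto_add_atTop_iff_nat (f := fun n : ℕ => v n / (n : ℝ) ^ D) k]
  refine IsEquivalent.tendsto_nhds_iff (IsEquivalent.refl.div (IsEquivalent.pow ?_ D))
  have hk : (fun _ : ℕ => (k : ℝ)) =o[atTop] fun n : ℕ => (n : ℝ) :=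
    (isLittleO_const_id_atTop (k : ℝ)).comp_tendsto tendsto_natCast_atTop_atTop
  have := (IsEquivalent.refl.add_isLittleO hk).symm
  simpa [Pi.add_def] using this

def newNodeCount : ℕ → ℕ
  | 0 => 1
  | 1 => 2
  | t + 2 => 2 ^ (t + 1)

theorem card_newNodes_eq_newNodeCount {α : Type*} [DecidableEq α] {S : ℕ → Finset α} {f : ℕ → ℕ}
    (hf1 : f 1 = 1) (hf : ∀ k, 2 ≤ k → f k = 2 ^ (k - 1) + 1)
    (hS : ∀ k, 1 ≤ k → S k ⊆ S (k + 1)) (hS_card : ∀ k, 1 ≤ k → (S k).card = f k) (t : ℕ) :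
    (newNodes S t).card = newNodeCount t := by
  rcases t with _ | t
  · simp [newNodes, newNodeCount, hS_card, hf1]
  rw [newNodes, card_sdiff_of_subset (hS _ (by omega)), hS_card _ (by omega),
    hS_card _ (by omega), hf _ (by omega)]
  rcases t with _ | t
  · simp [hf1, newNodeCount]
  · rw [hf _ (by omega)]
    simp only [add_tsub_cancel_right, Nat.reduceSubDiff, newNodeCount, pow_succ]
    omega

-- For `d ≥ 1` this is `N(d, m) / 2 ^ m` (see `smolyakCard_eq_simplexSum`).
noncomputable def normalizedCount (d m : ℕ) : ℝ :=
  simplexSum (fun t => (newNodeCount t : ℝ)) d m / 2 ^ m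

theorem normalizedCount_succ (d m : ℕ) :
    normalizedCount (d + 1) m =
      ∑ a ∈ range (m + 1), (newNodeCount a : ℝ) / 2 ^ a * normalizedCount d (m - a) := by
  rw [normalizedCount, simplexSum_succ, sum_div]
  refine sum_congr rfl fun a ha => ?_
  have hpow : (2 : ℝ) ^ m = 2 ^ a * 2 ^ (m - a) := by
    rw [← pow_add, Nat.add_sub_cancel' (Nat.lt_succ_iff.1 (mem_range.1 ha))]
  rw [normalizedCount, hpow, mul_div_mul_comm]

theorem normalizedCount_succ_succ (d n : ℕ) :
    normalizedCount (d + 1) (n + 1) =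
      ∑ k ∈ range (n + 2), normalizedCount d k - 1 / 2 * ∑ k ∈ range n, normalizedCount d k := by
  have htail : ∑ a ∈ range n, (newNodeCount (a + 2) : ℝ) / 2 ^ (a + 2) *
      normalizedCount d (n + 1 - (a + 2)) = 1 / 2 * ∑ k ∈ range n, normalizedCount d k := by
    rw [← sum_range_reflect (normalizedCount d) n, mul_sum]
    refine sum_congr rfl fun a ha => ?_
    rw [show n + 1 - (a + 2) = n - 1 - a by omega]
    simp only [newNodeCount]
    push_cast
    rw [pow_succ 2 (a + 1)]
    field_simp
  rw [normalizedCount_succ, sum_range_succ', sum_range_succ', htail]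
  simp only [sum_range_succ, newNodeCount, zero_add, Nat.add_sub_cancel, Nat.sub_zero, pow_zero,
    pow_one, Nat.cast_one, Nat.cast_ofNat]
  ring

theorem tendsto_normalizedCount_succ_div_pow {d E : ℕ} {σ : ℝ}
    (h : Tendsto (fun n : ℕ => (∑ k ∈ range n, normalizedCount d k) / (n : ℝ) ^ E) atTop (𝓝 σ)) :
    Tendsto (fun n : ℕ => normalizedCount (d + 1) n / (n : ℝ) ^ E) atTop (𝓝 (σ / 2)) := by
  rw [← tendsto_comp_add_div_pow_iff E 1]
  have h2 := (tendsto_comp_add_div_pow_iff E 2).2 h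
  have := h2.sub (h.const_mul (1 / 2))
  rw [show σ - 1 / 2 * σ = σ / 2 by ring] at this
  refine this.congr fun n => ?_
  rw [normalizedCount_succ_succ]
  ring

theorem tendsto_sum_normalizedCount_div_pow (d : ℕ) :
    Tendsto (fun n : ℕ => (∑ k ∈ range n, normalizedCount d k) / (n : ℝ) ^ d) atTop
      (𝓝 (2 / (2 ^ d * d.factorial))) := by
  induction d with
  | zero =>
    have : ∀ k, normalizedCount 0 k = (1 / 2) ^ k := by simp [normalizedCount]
    simpa [this] using hasSum_geometric_two.tendsto_sum_nat
  | succ d ih =>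
    convert tendsto_sum_range_div_pow_succ (tendsto_normalizedCount_succ_div_pow ih) using 2
    push_cast [Nat.factorial_succ]
    field_simp
    ring

open Filter in
/-- For the growth function with `f(1) = 1` and `f(k) = 2^(k-1) + 1` for `k ≥ 2`, for each
fixed `d ≥ 1` one has `N(d, μ) / (2^μ μ^(d-1)) → 1/(2^(d-1)·(d-1)!)` as `μ → ∞`. -/
theorem smolyakCard_of_two_pow_pred_add_one_asymptotics
    (f : ℕ → ℕ) (hf1 : f 1 = 1) (hf : ∀ k, 2 ≤ k → f k = 2 ^ (k - 1) + 1)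
    (S : ℕ → Finset ℝ) (hS_nested : ∀ k, 1 ≤ k → S k ⊆ S (k + 1))
    (hS_card : ∀ k, 1 ≤ k → (S k).card = f k)
    (d : ℕ) (hd : 1 ≤ d) :
    Tendsto (fun μ : ℕ => (smolyakCard S d μ : ℝ) / (2 ^ μ * (μ : ℝ) ^ (d - 1)))
      atTop (nhds (1 / (2 ^ (d - 1) * (d - 1).factorial))) := by
  obtain ⟨D, rfl⟩ : ∃ D, d = D + 1 := ⟨d - 1, by omega⟩
  have hcount (μ : ℕ) : (smolyakCard S (D + 1) μ : ℝ) = 2 ^ μ * normalizedCount (D + 1) μ := by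
    rw [smolyakCard_eq_simplexSum hS_nested hd,
      funext (card_newNodes_eq_newNodeCount hf1 hf hS_nested hS_card), normalizedCount,
      mul_div_cancel₀ _ (by positivity)]
    simp [simplexSum]
  have := tendsto_normalizedCount_succ_div_pow (tendsto_sum_normalizedCount_div_pow D)
  convert this using 2 with μ
  · rw [hcount, Nat.add_sub_cancel, mul_div_mul_left _ _ (by positivity)]
  · rw [Nat.add_sub_cancel]
    field_simp
end
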